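/- In the reduction from t-veto-WCCDV to t-approval-WCCAV: given a t-veto election (C,V) with |C| = m, maximum voter weight ω_max, padding candidate set D with |C|+|D| divisible by t, and the constructed t-approval election E' = (C', V') as in the construction, every candidate c ∈ C has t-approval score in E' equal to ω_max + s_c, where s_c is c's t-veto score in (C,V), and every candidate in C' \ C has t-approval score at most ω_max in E'. -/

import Mathlib

/-!
Candidates of `E'` are encoded as `α ⊕ δ ⊕ π` (the original candidates `C`, the padding set `D`,
the fresh padding candidates) and a vote as a pair (weight, approved set).

A candidate `c ∈ C` is approved by exactly one vote of `V0`, of weight `ωmax`, and, for each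
original voter `v i` not vetoing it, by exactly one vote of weight `(v i).1` among the votes
built from `v i`; summing gives `ωmax + s_c`. Every other candidate is approved by at most one
vote of `E'` (a `D`-candidate only in `V0`, a fresh one by construction), and every vote weighs
at most `ωmax`.
-/

/-- Approval score: total weight of votes approving candidate `c`. -/
def appScore {γ : Type*} [DecidableEq γ] (M : Multiset (ℕ × Finset γ)) (c : γ) : ℕ :=
  (M.map (fun u => if c ∈ u.2 then u.1 else 0)).sum

theorem Multiset.sum_map_ite_const_eq_mul_countP {β : Type*} (M : Multiset β) (p : β → Prop)
    [DecidablePred p] (w : ℕ) :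
    (M.map fun u => if p u then w else 0).sum = w * M.countP p := by
  induction M using Multiset.induction_on with
  | empty => simp
  | cons a M ih => by_cases h : p a <;> simp [h, ih, mul_add, add_comm]

section appScore

variable {γ : Type*} [DecidableEq γ]

theorem appScore_add (M N : Multiset (ℕ × Finset γ)) (c : γ) :
    appScore (M + N) c = appScore M c + appScore N c := by
  simp [appScore]

theorem appScore_sum {ι : Type*} (s : Finset ι) (W : ι → Multiset (ℕ × Finset γ)) (c : γ) :
    appScore (∑ i ∈ s, W i) c = ∑ i ∈ s, appScore (W i) c := by
  classical
  induction s using Finset.induction with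
  | empty => simp [appScore]
  | insert a s h ih => simp [Finset.sum_insert h, appScore_add, ih]

theorem appScore_eq_mul_countP {M : Multiset (ℕ × Finset γ)} {c : γ} {w : ℕ}
    (hw : ∀ u ∈ M, c ∈ u.2 → u.1 = w) :
    appScore M c = w * M.countP (fun u => c ∈ u.2) := by
  rw [appScore, ← Multiset.sum_map_ite_const_eq_mul_countP]
  congr 1
  refine Multiset.map_congr rfl fun u hu => ?_
  split_ifs with h
  exacts [hw u hu h, rfl]

theorem appScore_le_mul_countP {M : Multiset (ℕ × Finset γ)} {c : γ} {w : ℕ}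
    (hw : ∀ u ∈ M, c ∈ u.2 → u.1 ≤ w) :
    appScore M c ≤ w * M.countP (fun u => c ∈ u.2) := by
  rw [appScore, ← Multiset.sum_map_ite_const_eq_mul_countP]
  refine Multiset.sum_map_le_sum_map _ _ fun u hu => ?_
  split_ifs with h
  exacts [hw u hu h, le_rfl]

theorem appScore_le_of_countP_le_one {M : Multiset (ℕ × Finset γ)} {c : γ} {w : ℕ}
    (hw : ∀ u ∈ M, u.1 ≤ w) (hc : M.countP (fun u => c ∈ u.2) ≤ 1) : appScore M c ≤ w :=
  (appScore_le_mul_countP fun u hu _ => hw u hu).trans (by simpa using Nat.mul_le_mul_left w hc)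

end appScore

theorem stmt12_general {α δ π : Type*} [DecidableEq α] [DecidableEq δ] [DecidableEq π]
    (n ωmax : ℕ)
    (v : Fin n → ℕ × Finset α)
    (hvw : ∀ i, (v i).1 ≤ ωmax)
    (V0 : Multiset (ℕ × Finset (α ⊕ δ ⊕ π)))
    (hV0w : ∀ u ∈ V0, u.1 = ωmax)
    (hV0once : ∀ c : α, Multiset.countP (fun u => Sum.inl c ∈ u.2) V0 = 1)
    (hV0onceD : ∀ dd : δ, Multiset.countP (fun u => Sum.inr (Sum.inl dd) ∈ u.2) V0 = 1)
    (W : Fin n → Multiset (ℕ × Finset (α ⊕ δ ⊕ π)))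
    (hWw : ∀ i, ∀ u ∈ W i, u.1 = (v i).1)
    (hWapp : ∀ i, ∀ c : α, c ∉ (v i).2 →
      Multiset.countP (fun u => Sum.inl c ∈ u.2) (W i) = 1)
    (hWveto : ∀ i, ∀ c : α, c ∈ (v i).2 →
      Multiset.countP (fun u => Sum.inl c ∈ u.2) (W i) = 0)
    (hWD : ∀ i, ∀ u ∈ W i, ∀ dd : δ, Sum.inr (Sum.inl dd) ∉ u.2)
    (hfresh : ∀ pp : π,
      Multiset.countP (fun u => Sum.inr (Sum.inr pp) ∈ u.2) (V0 + ∑ i, W i) ≤ 1) :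
    (∀ c : α, appScore (V0 + ∑ i, W i) (Sum.inl c) =
        ωmax + ∑ i, (if c ∈ (v i).2 then 0 else (v i).1)) ∧
    (∀ x : δ ⊕ π, appScore (V0 + ∑ i, W i) (Sum.inr x) ≤ ωmax) := by
  constructor
  · intro c
    have hV0 : appScore V0 (Sum.inl c) = ωmax := by
      rw [appScore_eq_mul_countP fun u hu _ => hV0w u hu, hV0once, mul_one]
    have hW (i : Fin n) :
        appScore (W i) (Sum.inl c) = if c ∈ (v i).2 then 0 else (v i).1 := by
      rw [appScore_eq_mul_countP fun u hu _ => hWw i u hu]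
      split_ifs with h
      · rw [hWveto i c h, mul_zero]
      · rw [hWapp i c h, mul_one]
    simp only [appScore_add, appScore_sum, hV0, hW]
  · have hweight : ∀ u ∈ V0 + ∑ i, W i, u.1 ≤ ωmax := by
      intro u hu
      rcases Multiset.mem_add.1 hu with hu | hu
      · exact (hV0w u hu).le
      · obtain ⟨i, -, hi⟩ := Multiset.mem_sum.1 hu
        exact (hWw i u hi).trans_le (hvw i)
    rintro (dd | pp) <;> refine appScore_le_of_countP_le_one hweight ?_
    · rw [Multiset.countP_add, hV0onceD, Multiset.countP_eq_zero.2]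
      intro u hu
      obtain ⟨i, -, hi⟩ := Multiset.mem_sum.1 hu
      exact hWD i u hi dd
    · exact hfresh pp

/-- In the reduction from `t`-veto-WCCDV to `t`-approval-WCCAV, with original
candidates `α` (`|α| = m`), padding candidates `D` (type `δ`) and fresh padding candidates
(type `π`); original `t`-veto voters `v i` of weight `(v i).1 ≤ ωmax` and veto set `(v i).2`
of size `t`; `V0` consisting of weight-`ωmax` `t`-approval votes approving each candidate of
`C ∪ D` exactly once and no fresh padding candidate; and for each `i` a collection `W i` of
`m − t` votes of weight `(v i).1` approving each candidate approved by `v i` exactly once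
(none vetoed by `v i`, no `D` candidates), each fresh padding candidate being approved in at
most one vote of the whole election `E' = V0 + Σ_i W i` — every `c ∈ C` has `t`-approval
score `ωmax + s_c` in `E'` (`s_c` being `c`'s `t`-veto score in `(C,V)`), and every other
candidate has `t`-approval score at most `ωmax`. -/
theorem stmt12 {α δ π : Type*} [DecidableEq α] [DecidableEq δ] [DecidableEq π] [Fintype α]
    (t m n ωmax : ℕ) (hm : Fintype.card α = m) (htm : t ≤ m)
    (v : Fin n → ℕ × Finset α)
    (hvt : ∀ i, (v i).2.card = t)
    (hvw : ∀ i, (v i).1 ≤ ωmax)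
    (V0 : Multiset (ℕ × Finset (α ⊕ δ ⊕ π)))
    (hV0w : ∀ u ∈ V0, u.1 = ωmax)
    (hV0t : ∀ u ∈ V0, u.2.card = t)
    (hV0pad : ∀ u ∈ V0, ∀ pp : π, Sum.inr (Sum.inr pp) ∉ u.2)
    (hV0once : ∀ c : α, Multiset.countP (fun u => Sum.inl c ∈ u.2) V0 = 1)
    (hV0onceD : ∀ dd : δ, Multiset.countP (fun u => Sum.inr (Sum.inl dd) ∈ u.2) V0 = 1)
    (W : Fin n → Multiset (ℕ × Finset (α ⊕ δ ⊕ π)))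
    (hWw : ∀ i, ∀ u ∈ W i, u.1 = (v i).1)
    (hWt : ∀ i, ∀ u ∈ W i, u.2.card = t)
    (hWcard : ∀ i, Multiset.card (W i) = m - t)
    (hWapp : ∀ i, ∀ c : α, c ∉ (v i).2 →
      Multiset.countP (fun u => Sum.inl c ∈ u.2) (W i) = 1)
    (hWveto : ∀ i, ∀ c : α, c ∈ (v i).2 →
      Multiset.countP (fun u => Sum.inl c ∈ u.2) (W i) = 0)
    (hWD : ∀ i, ∀ u ∈ W i, ∀ dd : δ, Sum.inr (Sum.inl dd) ∉ u.2)
    (hfresh : ∀ pp : π,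
      Multiset.countP (fun u => Sum.inr (Sum.inr pp) ∈ u.2) (V0 + ∑ i, W i) ≤ 1) :
    (∀ c : α, appScore (V0 + ∑ i, W i) (Sum.inl c) =
        ωmax + ∑ i, (if c ∈ (v i).2 then 0 else (v i).1)) ∧
    (∀ x : δ ⊕ π, appScore (V0 + ∑ i, W i) (Sum.inr x) ≤ ωmax) :=
  stmt12_general n ωmax v hvw V0 hV0w hV0once hV0onceD W hWw hWapp hWveto hWD hfresh
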